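/- arXiv:2204.09560 — 2 statements merged into one kernel-verified Lean document; each statement's English description precedes it below -/
import Mathlib

section
/- Let Φ : X → ℝ^d be a bounded measurable feature map on a probability space (X, P), let M = E[Φ(x)Φ(x)ᵀ], and fix ε > 0 such that ε² is not an eigenvalue of M. If x₁, x₂, … are i.i.d. samples from P and Φₙ is the n×d matrix with rows Φ(xᵢ), then the number of singular values of (1/√n)Φₙ exceeding ε converges almost surely to the number of eigenvalues of M exceeding ε². -/
/-!
By the strong law of large numbers, applied entrywise, the Gram matrix `(1/n) ΦₙᵀΦₙ` converges
almost surely to `M`, and its eigenvalues are the squared singular values of `(1/√n) Φₙ`. For a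
continuous `f`, the spectral sum `∑ f(λᵢ) = tr f(A)` is continuous in the Hermitian matrix `A`
(continuity of the functional calculus). Since `ε²` is not an eigenvalue of `M`, the indicator of
`(ε², ∞)` can be squeezed between two continuous functions that agree with it on the spectrum of
`M`; the two spectral sums then pin the eigenvalue count of the Gram matrix to that of `M` for
all large `n`.
-/

open Matrix MeasureTheory ProbabilityTheory Filter Finset

/-- The ε-thresholded singular value count of a real n×d matrix: the number of
singular values (square roots of eigenvalues of ΦᵀΦ) exceeding ε. -/
noncomputable def svCount {n d : ℕ} (Φ : Matrix (Fin n) (Fin d) ℝ) (ε : ℝ) : ℕ :=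
  (Finset.univ.filter fun i : Fin d =>
    ε < Real.sqrt ((Matrix.isHermitian_conjTranspose_mul_self Φ).eigenvalues i)).card

open Topology

theorem Matrix.IsHermitian.trace_cfc {𝕜 n : Type*} [RCLike 𝕜] [Fintype n] [DecidableEq n]
    {A : Matrix n n 𝕜} (hA : A.IsHermitian) (f : ℝ → ℝ) :
    (cfc f A).trace = ∑ i, (f (hA.eigenvalues i) : 𝕜) := by
  rw [hA.cfc_eq, IsHermitian.cfc, Unitary.conjStarAlgAut_apply, trace_mul_cycle,
    Unitary.coe_star_mul_self, Matrix.one_mul, trace_diagonal]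
  rfl

open scoped Matrix.Norms.L2Operator in
theorem Matrix.continuousOn_cfc_isHermitian {n : Type*} [Fintype n] [DecidableEq n]
    {f : ℝ → ℝ} (hf : Continuous f) :
    ContinuousOn (cfc f) {A : Matrix n n ℝ | A.IsHermitian} :=
  ContinuousOn.cfc_of_mem_nhdsSet (s := Set.univ) f (a := id) univ_mem continuousOn_id
    (fun _ hA => hA) hf.continuousOn

theorem Matrix.tendsto_sum_eigenvalues {α n : Type*} [Fintype n] [DecidableEq n] {l : Filter α}
    {B : α → Matrix n n ℝ} (hB : ∀ a, (B a).IsHermitian) {M : Matrix n n ℝ} (hM : M.IsHermitian)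
    (hlim : Tendsto B l (𝓝 M)) {f : ℝ → ℝ} (hf : Continuous f) :
    Tendsto (fun a => ∑ i, f ((hB a).eigenvalues i)) l (𝓝 (∑ i, f (hM.eigenvalues i))) := by
  have hcfc : Tendsto (fun a => cfc f (B a)) l (𝓝 (cfc f M)) :=
    (continuousOn_cfc_isHermitian hf M hM).tendsto.comp
      (tendsto_nhdsWithin_iff.2 ⟨hlim, Eventually.of_forall hB⟩)
  have htrace := (continuous_id.matrix_trace.tendsto _).comp hcfc
  simpa only [Function.comp_def, id, (hB _).trace_cfc, hM.trace_cfc, RCLike.ofReal_real_eq_id]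
    using htrace

theorem Filter.eventually_card_lt_eq_of_tendsto_sum {α ι : Type*} [Fintype ι] {l : Filter α}
    {x : α → ι → ℝ} {y : ι → ℝ}
    (hlim : ∀ f : ℝ → ℝ, Continuous f → Tendsto (fun a => ∑ i, f (x a i)) l (𝓝 (∑ i, f (y i))))
    {t : ℝ} (ht : ∀ i, y i ≠ t) :
    ∀ᶠ a in l, #{i | t < x a i} = #{i | t < y i} := by
  classical
  have hcard (z : ι → ℝ) : (#{i | t < z i} : ℝ) = ∑ i, if t < z i then 1 else 0 := by
    rw [Finset.sum_boole]
  -- Urysohn functions: `g₂ ≤ 1_(t, ∞) ≤ g₁`, with equality at every `y i`.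
  obtain ⟨g₁, hg₁y, hg₁t, hg₁⟩ := exists_continuous_zero_one_of_isClosed
    (Set.toFinite (y '' {i | y i < t})).isClosed isClosed_Ici
    (Set.disjoint_left.2 fun _ ⟨_, hi, hiz⟩ hz => hi.not_ge (hiz ▸ Set.mem_Ici.1 hz))
  obtain ⟨g₂, hg₂t, hg₂y, hg₂⟩ := exists_continuous_zero_one_of_isClosed
    isClosed_Iic (Set.toFinite (y '' {i | t < y i})).isClosed
    (Set.disjoint_left.2 fun _ hz ⟨_, hi, hiz⟩ => hi.not_ge (hiz ▸ Set.mem_Iic.1 hz))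
  have hg₁_ge (z : ℝ) : (if t < z then 1 else 0) ≤ g₁ z := by
    split_ifs with h
    · exact (hg₁t (Set.mem_Ici.2 h.le)).ge
    · exact (hg₁ z).1
  have hg₂_le (z : ℝ) : g₂ z ≤ if t < z then 1 else 0 := by
    split_ifs with h
    · exact (hg₂ z).2
    · exact (hg₂t (Set.mem_Iic.2 (not_lt.1 h))).le
  have hg_y (i : ι) :
      g₁ (y i) = (if t < y i then 1 else 0) ∧ g₂ (y i) = if t < y i then 1 else 0 := by
    rcases (ht i).lt_or_gt with h | h
    · simp [h.not_gt, hg₁y ⟨i, h, rfl⟩, hg₂t (Set.mem_Iic.2 h.le)]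
    · simp [h, hg₁t (Set.mem_Ici.2 h.le), hg₂y ⟨i, h, rfl⟩]
  have h₁ := (hlim g₁ g₁.continuous).eventually_lt_const
    (show ∑ i, g₁ (y i) < #{i | t < y i} + 1 by simp only [hg_y, hcard]; linarith)
  have h₂ := (hlim g₂ g₂.continuous).eventually_const_lt
    (show (#{i | t < y i} : ℝ) - 1 < ∑ i, g₂ (y i) by simp only [hg_y, hcard]; linarith)
  filter_upwards [h₁, h₂] with a ha₁ ha₂
  have hle : (#{i | t < x a i} : ℝ) ≤ ∑ i, g₁ (x a i) :=
    hcard (x a) ▸ Finset.sum_le_sum fun i _ => hg₁_ge _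
  have hge : ∑ i, g₂ (x a i) ≤ (#{i | t < x a i} : ℝ) :=
    hcard (x a) ▸ Finset.sum_le_sum fun i _ => hg₂_le _
  have hlt₁ : #{i | t < x a i} < #{i | t < y i} + 1 := by exact_mod_cast hle.trans_lt ha₁
  have hlt₂ : #{i | t < y i} < #{i | t < x a i} + 1 := by
    exact_mod_cast sub_lt_iff_lt_add.1 (ha₂.trans_le hge)
  omega

theorem ProbabilityTheory.strong_law_ae_comp {X Ω : Type*} [MeasurableSpace X]
    [MeasurableSpace Ω] {μ : Measure Ω} {P : Measure X} {ξ : ℕ → Ω → X}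
    (hξ : ∀ n, Measurable (ξ n)) (hindep : iIndepFun ξ μ) (hlaw : ∀ n, μ.map (ξ n) = P)
    {g : X → ℝ} (hg : Measurable g) (hgi : Integrable g P) :
    ∀ᵐ ω ∂μ, Tendsto (fun n : ℕ => (∑ k ∈ range n, g (ξ k ω)) / n) atTop (𝓝 (∫ x, g x ∂P)) := by
  have hident (k : ℕ) : IdentDistrib (ξ k) (ξ 0) μ μ :=
    ⟨(hξ k).aemeasurable, (hξ 0).aemeasurable, (hlaw k).trans (hlaw 0).symm⟩
  have hmean : ∫ ω, g (ξ 0 ω) ∂μ = ∫ x, g x ∂P := by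
    rw [← hlaw 0, integral_map (hξ 0).aemeasurable hg.aestronglyMeasurable]
  rw [← hmean]
  exact strong_law_ae_real (fun k ω => g (ξ k ω)) ((hlaw 0 ▸ hgi).comp_measurable (hξ 0))
    (fun k l hkl => (hindep.indepFun hkl).comp hg hg) (fun k => (hident k).comp hg)

theorem svCount_eq_card_sq_lt {n d : ℕ} (A : Matrix (Fin n) (Fin d) ℝ) {ε : ℝ} (hε : 0 ≤ ε) :
    svCount A ε = #{i | ε ^ 2 < (isHermitian_conjTranspose_mul_self A).eigenvalues i} := by
  simp only [svCount, Real.lt_sqrt hε]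

theorem Matrix.conjTranspose_mul_self_inv_sqrt_smul_of_apply {d : ℕ} (v : ℕ → Fin d → ℝ)
    (n : ℕ) (i j : Fin d) :
    (((Real.sqrt n)⁻¹ • of fun (k : Fin n) => v k)ᴴ * (Real.sqrt n)⁻¹ • of fun (k : Fin n) => v k)
      i j = (∑ k ∈ range n, v k i * v k j) / n := by
  have hsq : (Real.sqrt n)⁻¹ * (Real.sqrt n)⁻¹ = (n : ℝ)⁻¹ := by
    rw [← mul_inv, Real.mul_self_sqrt n.cast_nonneg]
  simp only [mul_apply, conjTranspose_apply, smul_apply, of_apply, star_trivial, smul_eq_mul]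
  rw [← Fin.sum_univ_eq_sum_range (fun k => v k i * v k j), Finset.sum_div]
  refine Finset.sum_congr rfl fun k _ => ?_
  rw [div_eq_mul_inv, ← hsq]
  ring

theorem feature_rank_estimator_consistent_general
    {d : ℕ} {X Ω : Type*} [MeasurableSpace X] [MeasurableSpace Ω]
    (P : Measure X) [IsProbabilityMeasure P] (μ : Measure Ω)
    (Φ : X → Fin d → ℝ) (hΦmeas : Measurable Φ)
    (C : ℝ) (hbound : ∀ x i, |Φ x i| ≤ C)
    (M : Matrix (Fin d) (Fin d) ℝ) (hMdef : ∀ i j, M i j = ∫ x, Φ x i * Φ x j ∂P)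
    (hM : M.IsHermitian)
    (ε : ℝ) (hε : 0 < ε) (hne : ∀ i, hM.eigenvalues i ≠ ε ^ 2)
    (ξ : ℕ → Ω → X) (hξmeas : ∀ n, Measurable (ξ n))
    (hindep : iIndepFun ξ μ)
    (hlaw : ∀ n, Measure.map (ξ n) μ = P) :
    ∀ᵐ ω ∂μ, Tendsto
      (fun n : ℕ => svCount
        ((Real.sqrt (n : ℝ))⁻¹ • Matrix.of (fun (i : Fin n) (j : Fin d) => Φ (ξ i ω) j)) ε)
      atTop (nhds ((Finset.univ.filter fun i => ε ^ 2 < hM.eigenvalues i).card)) := by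
  have hmeas (i j : Fin d) : Measurable fun x => Φ x i * Φ x j := by fun_prop
  have hint (i j : Fin d) : Integrable (fun x => Φ x i * Φ x j) P := by
    refine .of_bound (hmeas i j).aestronglyMeasurable (C * C) (ae_of_all _ fun x => ?_)
    rw [Real.norm_eq_abs, abs_mul]
    exact mul_le_mul (hbound x i) (hbound x j) (abs_nonneg _) ((abs_nonneg _).trans (hbound x i))
  have hslln : ∀ᵐ ω ∂μ, ∀ i j, Tendsto
      (fun n : ℕ => (∑ k ∈ range n, Φ (ξ k ω) i * Φ (ξ k ω) j) / n) atTop (𝓝 (M i j)) := by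
    simp only [hMdef, ae_all_iff]
    exact fun i j => strong_law_ae_comp hξmeas hindep hlaw (hmeas i j) (hint i j)
  filter_upwards [hslln] with ω hω
  have hgram : Tendsto (fun n : ℕ => ((Real.sqrt n)⁻¹ • of fun (i : Fin n) j => Φ (ξ i ω) j)ᴴ *
      (Real.sqrt n)⁻¹ • of fun (i : Fin n) j => Φ (ξ i ω) j) atTop (𝓝 M) := by
    refine tendsto_pi_nhds.2 fun i => tendsto_pi_nhds.2 fun j => ?_
    exact (hω i j).congr fun n =>
      (conjTranspose_mul_self_inv_sqrt_smul_of_apply (fun k => Φ (ξ k ω)) n i j).symm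
  simp only [svCount_eq_card_sq_lt _ hε.le]
  refine tendsto_const_nhds.congr' (EventuallyEq.symm ?_)
  exact eventually_card_lt_eq_of_tendsto_sum (fun f hf => tendsto_sum_eigenvalues _ hM hgram hf) hne

/-- Consistency of the estimated feature rank: for a bounded measurable
feature map Φ with second-moment matrix M = E[Φ(x)Φ(x)ᵀ], if ε² is not an eigenvalue
of M and x₁, x₂, … are i.i.d. samples from P, then the number of singular values of
(1/√n)Φₙ exceeding ε converges a.s. to the number of eigenvalues of M exceeding ε². -/
theorem feature_rank_estimator_consistent
    {d : ℕ} {X Ω : Type*} [MeasurableSpace X] [MeasurableSpace Ω]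
    (P : Measure X) [IsProbabilityMeasure P] (μ : Measure Ω) [IsProbabilityMeasure μ]
    (Φ : X → Fin d → ℝ) (hΦmeas : Measurable Φ)
    (C : ℝ) (hbound : ∀ x i, |Φ x i| ≤ C)
    (M : Matrix (Fin d) (Fin d) ℝ) (hMdef : ∀ i j, M i j = ∫ x, Φ x i * Φ x j ∂P)
    (hM : M.IsHermitian)
    (ε : ℝ) (hε : 0 < ε) (hne : ∀ i, hM.eigenvalues i ≠ ε ^ 2)
    (ξ : ℕ → Ω → X) (hξmeas : ∀ n, Measurable (ξ n))
    (hindep : iIndepFun ξ μ)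
    (hlaw : ∀ n, Measure.map (ξ n) μ = P) :
    ∀ᵐ ω ∂μ, Tendsto
      (fun n : ℕ => svCount
        ((Real.sqrt (n : ℝ))⁻¹ • Matrix.of (fun (i : Fin n) (j : Fin d) => Φ (ξ i ω) j)) ε)
      atTop (nhds ((Finset.univ.filter fun i => ε ^ 2 < hM.eigenvalues i).card)) :=
  feature_rank_estimator_consistent_general P μ Φ hΦmeas C hbound M hMdef hM ε hε hne ξ hξmeas
    hindep hlaw
end

section
/- Let A = I - γP where P is a row-stochastic d×d matrix and 0 ≤ γ < 1, and let R ∈ ℝ^d, ε ∈ ℝ^k. Then the solution Φₜ = exp(-tA)(Φ₀ - A⁻¹Rεᵀ) + A⁻¹Rεᵀ of ∂ₜΦₜ = -AΦₜ + Rεᵀ converges as t → ∞ to the rank-at-most-one matrix (I - γP)⁻¹ R εᵀ. -/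
/-!
Since `1` commutes with everything, `exp (-t(1 - γP)) = e^{-t} exp (tγP)`, and in the `ℓ∞` operator
norm a row-stochastic `P` has norm at most `1`, so `‖exp (-t(1 - γP))‖ ≤ e^{-(1-γ)t} → 0`.
The transient term `exp (-tA) (Φ₀ - A⁻¹Rεᵀ)` therefore vanishes, leaving `A⁻¹Rεᵀ`.
-/

open Filter Topology

namespace NormedSpace

variable {𝔸 : Type*} [NormedRing 𝔸] [NormedAlgebra ℝ 𝔸]

theorem norm_exp_le_exp_norm [NormOneClass 𝔸] (x : 𝔸) : ‖exp x‖ ≤ Real.exp ‖x‖ := by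
  rw [exp_eq_tsum ℝ, Real.exp_eq_exp_ℝ, exp_eq_tsum_div]
  refine (norm_tsum_le_tsum_norm (norm_expSeries_summable' x)).trans <|
    (norm_expSeries_summable' x).tsum_le_tsum (fun n => ?_) (Real.summable_pow_div_factorial ‖x‖)
  rw [norm_smul, norm_inv, Real.norm_natCast, div_eq_inv_mul]
  gcongr
  exact norm_pow_le x n

variable [CompleteSpace 𝔸]

theorem exp_neg_smul_one_sub (t : ℝ) (a : 𝔸) :
    exp (-(t • (1 - a))) = Real.exp (-t) • exp (t • a) := by
  have hsplit : -(t • (1 - a)) = algebraMap ℝ 𝔸 (-t) + t • a := by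
    rw [Algebra.algebraMap_eq_smul_one]; module
  -- `exp_add_of_commute` asks for a `ℚ`-algebra structure; `exp` itself does not depend on it.
  let _ := NormedAlgebra.restrictScalars ℚ ℝ 𝔸
  rw [hsplit, exp_add_of_commute (Algebra.commutes _ _), ← algebraMap_exp_comm,
    ← Real.exp_eq_exp_ℝ, Algebra.algebraMap_eq_smul_one, smul_one_mul]

variable [NormOneClass 𝔸]

theorem norm_exp_neg_smul_one_sub_le {t : ℝ} (ht : 0 ≤ t) (a : 𝔸) :
    ‖exp (-(t • (1 - a)))‖ ≤ Real.exp (-(t * (1 - ‖a‖))) :=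
  calc ‖exp (-(t • (1 - a)))‖ = Real.exp (-t) * ‖exp (t • a)‖ := by
        rw [exp_neg_smul_one_sub, norm_smul, Real.norm_of_nonneg (Real.exp_nonneg _)]
    _ ≤ Real.exp (-t) * Real.exp (t * ‖a‖) := by
        gcongr
        refine (norm_exp_le_exp_norm _).trans_eq ?_
        rw [norm_smul, Real.norm_of_nonneg ht]
    _ = Real.exp (-(t * (1 - ‖a‖))) := by rw [← Real.exp_add]; ring_nf

theorem tendsto_exp_neg_smul_one_sub_atTop {a : 𝔸} (ha : ‖a‖ < 1) :
    Tendsto (fun t : ℝ => exp (-(t • (1 - a)))) atTop (𝓝 0) := by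
  refine squeeze_zero_norm' ?_ <| Real.tendsto_exp_neg_atTop_nhds_zero.comp <|
    tendsto_id.atTop_mul_const (sub_pos.2 ha)
  filter_upwards [eventually_ge_atTop 0] with t ht
  exact norm_exp_neg_smul_one_sub_le ht a

end NormedSpace

namespace Matrix

attribute [local instance] Matrix.linftyOpNormedRing Matrix.linftyOpNormedAlgebra

variable {n : Type*} [Fintype n] [DecidableEq n]

theorem linfty_opNorm_le_one_of_mem_rowStochastic {P : Matrix n n ℝ}
    (hP : P ∈ rowStochastic ℝ n) : ‖P‖ ≤ 1 := by
  rw [linfty_opNorm_def, NNReal.coe_le_one]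
  refine Finset.sup_le fun i _ => le_of_eq <| NNReal.coe_injective ?_
  push_cast
  simp_rw [Real.norm_of_nonneg (nonneg_of_mem_rowStochastic hP)]
  exact sum_row_of_mem_rowStochastic hP i

theorem tendsto_exp_neg_smul_one_sub_smul_of_mem_rowStochastic [Nonempty n] {P : Matrix n n ℝ}
    (hP : P ∈ rowStochastic ℝ n) {γ : ℝ} (hγ0 : 0 ≤ γ) (hγ1 : γ < 1) :
    Tendsto (fun t : ℝ => NormedSpace.exp (-(t • (1 - γ • P)))) atTop (𝓝 0) := by
  refine NormedSpace.tendsto_exp_neg_smul_one_sub_atTop ?_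
  calc ‖γ • P‖ = γ * ‖P‖ := by rw [norm_smul, Real.norm_of_nonneg hγ0]
    _ ≤ γ * 1 := by gcongr; exact linfty_opNorm_le_one_of_mem_rowStochastic hP
    _ < 1 := by linarith

end Matrix

/-- With A = I - γP (P row-stochastic, 0 ≤ γ < 1), the solution
Φₜ = exp(-tA)(Φ₀ - A⁻¹Rεᵀ) + A⁻¹Rεᵀ of ∂ₜΦₜ = -AΦₜ + Rεᵀ converges as t → ∞
(entrywise) to the rank-at-most-one matrix (I - γP)⁻¹Rεᵀ. -/
theorem td_features_converge_to_value_direction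
    {d k : ℕ} (P : Matrix (Fin d) (Fin d) ℝ)
    (hP : ∀ i j, 0 ≤ P i j) (hrow : ∀ i, ∑ j, P i j = 1)
    (γ : ℝ) (hγ0 : 0 ≤ γ) (hγ1 : γ < 1)
    (R : Fin d → ℝ) (ε : Fin k → ℝ) (Φ₀ : Matrix (Fin d) (Fin k) ℝ) :
    ∀ (i : Fin d) (j : Fin k),
      Tendsto (fun t : ℝ =>
        (NormedSpace.exp (-(t • ((1 : Matrix (Fin d) (Fin d) ℝ) - γ • P)))
            * (Φ₀ - ((1 : Matrix (Fin d) (Fin d) ℝ) - γ • P)⁻¹ * Matrix.vecMulVec R ε)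
          + ((1 : Matrix (Fin d) (Fin d) ℝ) - γ • P)⁻¹ * Matrix.vecMulVec R ε) i j)
        atTop
        (nhds ((((1 : Matrix (Fin d) (Fin d) ℝ) - γ • P)⁻¹ * Matrix.vecMulVec R ε) i j)) := by
  intro i j
  have : Nonempty (Fin d) := ⟨i⟩
  set Φ_star := ((1 : Matrix (Fin d) (Fin d) ℝ) - γ • P)⁻¹ * Matrix.vecMulVec R ε
  have hexp := Matrix.tendsto_exp_neg_smul_one_sub_smul_of_mem_rowStochastic
    (Matrix.mem_rowStochastic_iff_sum.2 ⟨hP, hrow⟩) hγ0 hγ1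
  have haffine : Continuous fun M : Matrix (Fin d) (Fin d) ℝ => M * (Φ₀ - Φ_star) + Φ_star :=
    (continuous_id.matrix_mul continuous_const).add continuous_const
  have hlim := (haffine.tendsto 0).comp hexp
  rw [Matrix.zero_mul, zero_add] at hlim
  exact ((continuous_apply_apply i j).tendsto Φ_star).comp hlim
end
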